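/- Let I be a squarefree monomial ideal in the polynomial ring S = K[x_1,...,x_n] over a field K, and let s ≥ 1 be an integer. Then the squarefree part I^{s} of the s-th symbolic power I^(s) is nonzero if and only if s ≤ ht(I), where ht(I) is the height of I. Moreover, if I is unmixed (all associated primes of S/I have the same height), then I^{ht(I)} is a principal ideal. -/

import Mathlib

open MvPolynomial

noncomputable section

/-! Generalities on graded pieces, Betti numbers and Castelnuovo–Mumford regularity
of homogeneous ideals in a polynomial ring, via the Koszul complex. -/

variable (K : Type) [Field K] (n : ℕ)

/-- The degree `d` graded piece of an ideal `I ⊆ K[x_1, …, x_n]`, as a `K`-subspace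
(`⊥` for negative `d`). -/
def degPiece (I : Ideal (MvPolynomial (Fin n) K)) (d : ℤ) :
    Submodule K (MvPolynomial (Fin n) K) :=
  if 0 ≤ d then (Submodule.restrictScalars K I) ⊓ homogeneousSubmodule (Fin n) K d.toNat
  else ⊥

theorem mulX_mem (I : Ideal (MvPolynomial (Fin n) K)) (k : Fin n) (d : ℤ)
    {x : MvPolynomial (Fin n) K} (hx : x ∈ degPiece K n I d) :
    (X k : MvPolynomial (Fin n) K) * x ∈ degPiece K n I (d + 1) := by
  by_cases h : 0 ≤ d
  · rw [degPiece, if_pos h, Submodule.mem_inf] at hx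
    rw [degPiece, if_pos (by omega : (0:ℤ) ≤ d + 1), Submodule.mem_inf]
    constructor
    · exact Ideal.mul_mem_left I _ hx.1
    · rw [mem_homogeneousSubmodule]
      have h2 := (isHomogeneous_X K k).mul ((mem_homogeneousSubmodule _ _).1 hx.2)
      have h3 : (d + 1).toNat = 1 + d.toNat := by omega
      rw [h3]
      exact h2
  · rw [degPiece, if_neg h, Submodule.mem_bot] at hx
    subst hx
    rw [mul_zero]
    exact Submodule.zero_mem _

/-- Multiplication by the variable `x_k`, as a map between graded pieces. -/
def mulXmap (I : Ideal (MvPolynomial (Fin n) K)) (k : Fin n) (d e : ℤ) (h : e = d + 1) :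
    degPiece K n I d →ₗ[K] degPiece K n I e :=
  LinearMap.restrict (LinearMap.mulLeft K (X k)) (by
    intro x hx
    subst h
    simpa using mulX_mem K n I k d hx)

/-- The differential, in internal degree `j`, of the complex obtained by tensoring the
ideal `I` with the Koszul complex on `x_1, …, x_n`; its homology computes
`Tor_i(I, K)_j`, whose dimension is the graded Betti number `β_{i,j}(I)`. -/
def koszulD (I : Ideal (MvPolynomial (Fin n) K)) (j i : ℕ) :
    ({T : Finset (Fin n) // T.card = i + 1} → degPiece K n I ((j : ℤ) - (i + 1)))
      →ₗ[K] ({T : Finset (Fin n) // T.card = i} → degPiece K n I ((j : ℤ) - i)) :=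
  LinearMap.pi fun T => ∑ k : Fin n,
    if h : k ∈ T.1 then 0
    else ((-1 : K) ^ (T.1.filter (fun l => l < k)).card) •
      ((mulXmap K n I k ((j : ℤ) - (i + 1)) ((j : ℤ) - i) (by ring)).comp
        (LinearMap.proj (⟨insert k T.1, by
          rw [Finset.card_insert_of_notMem h, T.2]⟩ : {T : Finset (Fin n) // T.card = i + 1})))

/-- The cycles of the (internal degree `j`) Koszul complex of `I` in homological degree `i`. -/
def kerChain (I : Ideal (MvPolynomial (Fin n) K)) (j : ℕ) :
    (i : ℕ) → Submodule K ({T : Finset (Fin n) // T.card = i} → degPiece K n I ((j : ℤ) - i))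
  | 0 => ⊤
  | (i + 1) => LinearMap.ker (koszulD K n I j i)

/-- The graded Betti number `β_{i,j}(I) = dim_K Tor_i(I, K)_j`. -/
def betti (I : Ideal (MvPolynomial (Fin n) K)) (i j : ℕ) : ℕ :=
  Module.finrank K (kerChain K n I j i) -
    Module.finrank K
      ((LinearMap.range (koszulD K n I j i) ⊓ kerChain K n I j i) : Submodule K _)

/-- The Castelnuovo–Mumford regularity `reg(I) = max { j - i | β_{i,j}(I) ≠ 0 }`. -/
def reg (I : Ideal (MvPolynomial (Fin n) K)) : ℤ :=
  sSup {r : ℤ | ∃ i j : ℕ, betti K n I i j ≠ 0 ∧ r = (j : ℤ) - i}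

/-- The squarefree part of a monomial ideal: the ideal generated by the squarefree
monomials belonging to it. -/
def sqfreePart (I : Ideal (MvPolynomial (Fin n) K)) : Ideal (MvPolynomial (Fin n) K) :=
  Ideal.span {m | m ∈ I ∧ ∃ A : Finset (Fin n), m = ∏ v ∈ A, X v}

/-- The `s`-th symbolic power of a (squarefree monomial) ideal:
the intersection of the `s`-th powers of its minimal primes; `S` for `s ≤ 0`. -/
def symbPow (I : Ideal (MvPolynomial (Fin n) K)) (s : ℤ) : Ideal (MvPolynomial (Fin n) K) :=
  if s ≤ 0 then ⊤ else ⨅ p ∈ I.minimalPrimes, p ^ s.toNat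

/-- `ssp I s` is `I^{s}`, the squarefree part of the `s`-th symbolic power of `I`. -/
def ssp (I : Ideal (MvPolynomial (Fin n) K)) (s : ℤ) : Ideal (MvPolynomial (Fin n) K) :=
  sqfreePart K n (symbPow K n I s)

/-- `sqPow I s` is `I^[s]`, the squarefree part of the ordinary power `I^s`. -/
def sqPow (I : Ideal (MvPolynomial (Fin n) K)) (s : ℕ) : Ideal (MvPolynomial (Fin n) K) :=
  sqfreePart K n (I ^ s)

/-- The height of an ideal: the minimum of the heights of its minimal primes. -/
def heightI (I : Ideal (MvPolynomial (Fin n) K)) : ℕ∞ :=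
  ⨅ p : I.minimalPrimes, Order.height (⟨p.1, p.2.1.1⟩ : PrimeSpectrum (MvPolynomial (Fin n) K))

/-- The colon ideal `(I : u)`. -/
def colonOf (I : Ideal (MvPolynomial (Fin n) K)) (u : MvPolynomial (Fin n) K) :
    Ideal (MvPolynomial (Fin n) K) :=
  Submodule.colon I (Ideal.span {u})

/-- `u` is a minimal monomial generator of the monomial ideal `I`:
`u` is a monomial belonging to `I` and `u/x_k ∉ I` for every variable `x_k` dividing `u`. -/
def IsMinGen (I : Ideal (MvPolynomial (Fin n) K)) (u : MvPolynomial (Fin n) K) : Prop :=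
  ∃ d : Fin n →₀ ℕ, u = monomial d (1 : K) ∧ u ∈ I ∧
    ∀ k : Fin n, d k ≠ 0 → monomial (d - Finsupp.single k 1) (1 : K) ∉ I

/-! Graph-theoretic notions. -/

/-- The graph obtained from `G` by deleting the vertices in `U` (and all edges meeting `U`),
on the same vertex set. -/
def delVerts (G : SimpleGraph (Fin n)) (U : Set (Fin n)) : SimpleGraph (Fin n) where
  Adj v w := G.Adj v w ∧ v ∉ U ∧ w ∉ U
  symm := ⟨fun _ _ h => ⟨h.1.symm, h.2.2, h.2.1⟩⟩
  loopless := ⟨fun v h => G.loopless.1 v h.1⟩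


/-- The edge ideal `I(G)` of a graph `G` on the vertex set `{x_1, …, x_n}`. -/
def edgeIdeal (G : SimpleGraph (Fin n)) : Ideal (MvPolynomial (Fin n) K) :=
  Ideal.span {m | ∃ v w, G.Adj v w ∧ m = X v * X w}

/-- `a`, `b` enumerate the endpoints of a matching of `G` of size `k`:
the edges `a i b i` are pairwise disjoint edges of `G`. -/
def IsMatching (G : SimpleGraph (Fin n)) (k : ℕ) (a b : Fin k → Fin n) : Prop :=
  (∀ i, G.Adj (a i) (b i)) ∧
    ∀ i j, i ≠ j → a i ≠ a j ∧ b i ≠ b j ∧ a i ≠ b j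

/-- The matching number `match(G)`. -/
def matchNum (G : SimpleGraph (Fin n)) : ℕ :=
  sSup {k | ∃ a b : Fin k → Fin n, IsMatching n G k a b}

/-- An induced matching: a matching such that no edge of `G` other than the matching edges
joins two of its vertices. -/
def IsInducedMatching (G : SimpleGraph (Fin n)) (k : ℕ) (a b : Fin k → Fin n) : Prop :=
  IsMatching n G k a b ∧ ∀ i j, i ≠ j →
    ¬ G.Adj (a i) (a j) ∧ ¬ G.Adj (a i) (b j) ∧ ¬ G.Adj (b i) (a j) ∧ ¬ G.Adj (b i) (b j)

/-- The induced matching number `ind-match(G)`. -/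
def indMatchNum (G : SimpleGraph (Fin n)) : ℕ :=
  sSup {k | ∃ a b : Fin k → Fin n, IsInducedMatching n G k a b}

/-- An ordered matching `{a_i b_i}`: the `a_i` form an independent set and
`a_i b_j ∈ E(G)` implies `i ≤ j`. -/
def IsOrderedMatching (G : SimpleGraph (Fin n)) (k : ℕ) (a b : Fin k → Fin n) : Prop :=
  IsMatching n G k a b ∧ (∀ i j, ¬ G.Adj (a i) (a j)) ∧ ∀ i j, G.Adj (a i) (b j) → i ≤ j

/-- The ordered matching number `ord-match(G)`. -/
def ordMatchNum (G : SimpleGraph (Fin n)) : ℕ :=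
  sSup {k | ∃ a b : Fin k → Fin n, IsOrderedMatching n G k a b}

/-- A graph is chordal if it has no induced cycle of length at least four. -/
def IsChordal (G : SimpleGraph (Fin n)) : Prop :=
  ∀ k : ℕ, 4 ≤ k → ∀ f : ZMod k → Fin n, Function.Injective f →
    ¬ (∀ i j : ZMod k, G.Adj (f i) (f j) ↔ (j = i + 1 ∨ i = j + 1))


/-- The star triangle graph with `t` triangles: vertex `0` is the common vertex of all the
triangles, and for `0 ≤ i < t` the vertices `2i+1`, `2i+2` are the other two vertices of the
`i`-th triangle. -/
def starTriangle (t : ℕ) : SimpleGraph (Fin (2 * t + 1)) where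
  Adj u v := u ≠ v ∧ ((u : ℕ) = 0 ∨ (v : ℕ) = 0 ∨ ((u : ℕ) - 1) / 2 = ((v : ℕ) - 1) / 2)
  symm := by
    constructor
    intro u v h
    exact ⟨h.1.symm, by tauto⟩
  loopless := by constructor; intro u h; exact h.1 rfl

end


/-! A minimal prime `p` of a squarefree monomial ideal is the monomial prime `P_C = (x_i : i ∈ C)`
of the variables it contains, and `ht P_C = |C|`: Krull's height theorem gives `≤`, the chain
`P_∅ < ⋯ < P_C` gives `≥`. A squarefree monomial `x_A` lies in `P_C ^ s` iff `s ≤ |A ∩ C|`, so some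
`x_A` (namely `x_1 ⋯ x_n`) lies in `I^(s)` iff `s ≤ |C|` for all minimal primes `P_C`, i.e.
`s ≤ ht I`. Minimal primes are associated, so if `I` is unmixed of height `h`, all these `C` have
`h` elements; then `x_A ∈ I^(h)` iff `A` contains every `C`, and `I^{h}` is generated by `x_U` for
`U` the union of the `C`. -/

namespace MvPolynomial

variable {σ R : Type*}

section CommSemiring
variable [CommSemiring R]

theorem X_mem_span_X_image_iff [Nontrivial R] {s : Set σ} {i : σ} :
    (X i : MvPolynomial σ R) ∈ Ideal.span (X '' s) ↔ i ∈ s := by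
  classical
  simp [mem_ideal_span_X_image, support_X, Finsupp.single_apply]

theorem prod_X_ne_zero [Nontrivial R] (A : Finset σ) : ∏ i ∈ A, (X i : MvPolynomial σ R) ≠ 0 := by
  simp_rw [X, ← monomial_sum_one]
  exact (monomial_eq_zero.not).2 one_ne_zero

end CommSemiring

section CommRing
variable [CommRing R]

theorem sub_aeval_ite_mem_span_X_image (s : Set σ) [DecidablePred (· ∈ s)]
    (f : MvPolynomial σ R) :
    f - aeval (fun i => if i ∈ s then 0 else X i) f ∈ Ideal.span (X '' s) := by
  induction f using MvPolynomial.induction_on with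
  | C a => simp
  | add f g hf hg =>
    rw [map_add, add_sub_add_comm]
    exact add_mem hf hg
  | mul_X f i hf =>
    rw [map_mul, aeval_X]
    split_ifs with hi
    · rw [mul_zero, sub_zero]
      exact Ideal.mul_mem_left _ _ (Ideal.subset_span ⟨i, hi, rfl⟩)
    · rw [← sub_mul]
      exact Ideal.mul_mem_right _ _ hf

theorem span_X_image_eq_ker (s : Set σ) [DecidablePred (· ∈ s)] :
    (Ideal.span (X '' s) : Ideal (MvPolynomial σ R)) =
      RingHom.ker (aeval fun i => if i ∈ s then 0 else (X i : MvPolynomial σ R)) := by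
  refine le_antisymm ?_ fun f hf => ?_
  · rw [Ideal.span_le]
    rintro _ ⟨i, hi, rfl⟩
    simp [hi]
  · have h := sub_aeval_ite_mem_span_X_image s f
    rwa [RingHom.mem_ker.1 hf, sub_zero] at h

theorem isPrime_span_X_image [IsDomain R] (s : Set σ) :
    (Ideal.span (X '' s) : Ideal (MvPolynomial σ R)).IsPrime := by
  classical
  rw [span_X_image_eq_ker]
  exact RingHom.ker_isPrime _

end CommRing

section Powers
variable [CommSemiring R] [DecidableEq σ]

theorem prod_X_mem_span_X_image_pow_of_le {A C : Finset σ} {k : ℕ} (h : k ≤ (A ∩ C).card) :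
    ∏ i ∈ A, (X i : MvPolynomial σ R) ∈ Ideal.span (X '' ↑C) ^ k := by
  obtain ⟨T, hT, rfl⟩ := Finset.exists_subset_card_eq h
  rw [← Finset.prod_sdiff (hT.trans Finset.inter_subset_left), ← Finset.prod_const]
  refine Ideal.mul_mem_left _ _ (Ideal.prod_mem_prod fun i hi => Ideal.subset_span ⟨i, ?_, rfl⟩)
  exact (Finset.mem_inter.1 (hT hi)).2

theorem prod_X_mem_span_X_image_pow_iff [Nontrivial R] {A C : Finset σ} {k : ℕ} :
    ∏ i ∈ A, (X i : MvPolynomial σ R) ∈ Ideal.span (X '' ↑C) ^ k ↔ k ≤ (A ∩ C).card := by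
  refine ⟨fun hmem => ?_, prod_X_mem_span_X_image_pow_of_le⟩
  by_contra! hlt
  -- the exponent of `t` counts the variables from `C`
  let Φ : MvPolynomial σ R →ₐ[R] Polynomial (MvPolynomial σ R) :=
    aeval fun i => Polynomial.C (X i) * if i ∈ C then Polynomial.X else 1
  have hspan : Ideal.map Φ (Ideal.span (X '' ↑C)) ≤ Ideal.span {Polynomial.X} := by
    rw [Ideal.map_span, Ideal.span_le]
    rintro _ ⟨_, ⟨i, hi, rfl⟩, rfl⟩
    simp [Φ, Finset.mem_coe.1 hi, Ideal.mem_span_singleton]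
  have hΦ : Φ (∏ i ∈ A, X i) =
      Polynomial.C (∏ i ∈ A, X i) * Polynomial.X ^ (A ∩ C).card := by
    simp only [Φ, map_prod, aeval_X]
    rw [Finset.prod_mul_distrib, Finset.prod_ite_mem, Finset.prod_const]
  have hdvd : Polynomial.X ^ k ∣ Φ (∏ i ∈ A, X i) := by
    rw [← Ideal.mem_span_singleton, ← Ideal.span_singleton_pow]
    exact Ideal.pow_right_mono hspan k (Ideal.map_pow Φ _ k ▸ Ideal.mem_map_of_mem Φ hmem)
  have hcoeff := Polynomial.X_pow_dvd_iff.1 hdvd _ hlt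
  rw [hΦ, Polynomial.coeff_C_mul_X_pow, if_pos rfl] at hcoeff
  exact prod_X_ne_zero A hcoeff

end Powers

section Height
variable [CommRing R] [IsDomain R]

theorem span_X_image_lt_span_X_image_insert [DecidableEq σ] {C : Finset σ} {i : σ} (hi : i ∉ C) :
    (Ideal.span (X '' ↑C) : Ideal (MvPolynomial σ R)) < Ideal.span (X '' ↑(insert i C)) := by
  refine lt_of_le_of_ne (Ideal.span_mono (Set.image_mono (by simp))) fun h => hi ?_
  have hX : (X i : MvPolynomial σ R) ∈ Ideal.span (X '' ↑(insert i C)) :=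
    X_mem_span_X_image_iff.2 (by simp)
  rwa [← h, X_mem_span_X_image_iff] at hX

theorem card_le_height_span_X_image (C : Finset σ) :
    (C.card : ℕ∞) ≤ (Ideal.span (X '' ↑C) : Ideal (MvPolynomial σ R)).height := by
  classical
  induction C using Finset.induction with
  | empty => simp
  | insert i C hi ih =>
    have := isPrime_span_X_image (R := R) (C : Set σ)
    have := isPrime_span_X_image (R := R) ((insert i C : Finset σ) : Set σ)
    calc ((insert i C).card : ℕ∞) = C.card + 1 := by simp [Finset.card_insert_of_notMem hi]
      _ ≤ (Ideal.span (X '' ↑C) : Ideal (MvPolynomial σ R)).height + 1 := by gcongr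
      _ ≤ _ := Ideal.height_add_one_le_of_lt_of_isPrime (span_X_image_lt_span_X_image_insert hi)

theorem height_span_X_image [IsNoetherianRing R] [Finite σ] (C : Finset σ) :
    (Ideal.span (X '' ↑C) : Ideal (MvPolynomial σ R)).height = C.card := by
  classical
  refine le_antisymm ?_ (card_le_height_span_X_image C)
  have := isPrime_span_X_image (R := R) (C : Set σ)
  have hmin : (Ideal.span (X '' ↑C) : Ideal (MvPolynomial σ R)) ∈
      (Ideal.span ↑(C.image (X (R := R)))).minimalPrimes := by
    rw [Finset.coe_image, Ideal.minimalPrimes_eq_subsingleton_self]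
    rfl
  exact (Ideal.height_le_card_of_mem_minimalPrimes_span_finset hmin).trans
    (by exact_mod_cast Finset.card_image_le)

end Height

end MvPolynomial

section AssociatedPrimes
variable {R : Type*} [CommRing R] [IsNoetherianRing R]

theorem isAssociatedPrime_of_mem_minimalPrimes {I p : Ideal R} (hp : p ∈ I.minimalPrimes) :
    IsAssociatedPrime p (R ⧸ I) := by
  rw [← Ideal.annihilator_quotient (I := I)] at hp
  exact Module.associatedPrimes.minimalPrimes_annihilator_subset_associatedPrimes R (R ⧸ I) hp

def Ideal.IsUnmixed (I : Ideal R) : Prop :=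
  ∀ p q : Ideal R, ∀ hp : IsAssociatedPrime p (R ⧸ I), ∀ hq : IsAssociatedPrime q (R ⧸ I),
    Order.height (⟨p, hp.1⟩ : PrimeSpectrum R) = Order.height (⟨q, hq.1⟩ : PrimeSpectrum R)

theorem Ideal.IsUnmixed.height_eq {I p : Ideal R} (hI : I.IsUnmixed) (hp : p ∈ I.minimalPrimes) :
    p.height = I.height := by
  have hheight {q : Ideal R} (hq : q ∈ I.minimalPrimes) : p.height = q.height := by
    have := hI p q (isAssociatedPrime_of_mem_minimalPrimes hp)
      (isAssociatedPrime_of_mem_minimalPrimes hq)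
    rwa [← PrimeSpectrum.height_eq_orderHeight, ← PrimeSpectrum.height_eq_orderHeight] at this
  rw [Ideal.height_eq_inf_minimalPrimes I]
  exact le_antisymm (le_iInf₂ fun q hq => (hheight hq).le) (iInf₂_le p hp)

end AssociatedPrimes

section SquarefreeMonomialIdeal
variable {σ R : Type*} [Fintype σ]

open Classical in
noncomputable def varsIn [CommSemiring R] (p : Ideal (MvPolynomial σ R)) : Finset σ :=
  Finset.univ.filter fun i => X i ∈ p

theorem mem_varsIn [CommSemiring R] {p : Ideal (MvPolynomial σ R)} {i : σ} :
    i ∈ varsIn p ↔ X i ∈ p := by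
  simp [varsIn]

variable [CommRing R] [IsDomain R] {I : Ideal (MvPolynomial σ R)} {𝒜 : Set (Finset σ)}

theorem eq_span_X_varsIn_of_mem_minimalPrimes
    (hI : I = Ideal.span ((fun A => ∏ i ∈ A, (X i : MvPolynomial σ R)) '' 𝒜))
    {p : Ideal (MvPolynomial σ R)} (hp : p ∈ I.minimalPrimes) :
    p = Ideal.span (X '' ↑(varsIn p)) := by
  have := hp.1.1
  have hle : Ideal.span (X '' ↑(varsIn p)) ≤ p := by
    rw [Ideal.span_le]
    rintro _ ⟨i, hi, rfl⟩
    exact mem_varsIn.1 hi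
  refine le_antisymm (hp.2 ⟨isPrime_span_X_image _, ?_⟩ hle) hle
  rw [hI, Ideal.span_le]
  rintro _ ⟨A, hA, rfl⟩
  have hAp : ∏ i ∈ A, X i ∈ p := hp.1.2 (hI ▸ Ideal.subset_span ⟨A, hA, rfl⟩)
  obtain ⟨i, hiA, hip⟩ := Ideal.IsPrime.prod_mem_iff.1 hAp
  exact Ideal.mem_of_dvd _ (Finset.dvd_prod_of_mem _ hiA)
    (Ideal.subset_span ⟨i, mem_varsIn.2 hip, rfl⟩)

theorem height_eq_card_varsIn_of_mem_minimalPrimes [IsNoetherianRing R]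
    (hI : I = Ideal.span ((fun A => ∏ i ∈ A, (X i : MvPolynomial σ R)) '' 𝒜))
    {p : Ideal (MvPolynomial σ R)} (hp : p ∈ I.minimalPrimes) :
    p.height = (varsIn p).card := by
  rw [eq_span_X_varsIn_of_mem_minimalPrimes hI hp, height_span_X_image,
    ← eq_span_X_varsIn_of_mem_minimalPrimes hI hp]

end SquarefreeMonomialIdeal

section SymbolicPower
variable {K : Type} [Field K] {n : ℕ} {I : Ideal (MvPolynomial (Fin n) K)}
  {𝒜 : Set (Finset (Fin n))}

theorem symbPow_natCast (I : Ideal (MvPolynomial (Fin n) K)) (s : ℕ) :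
    symbPow K n I s = ⨅ p ∈ I.minimalPrimes, p ^ s := by
  rcases s.eq_zero_or_pos with rfl | hs
  · simp [symbPow]
  · simp [symbPow, hs.ne']

theorem prod_X_mem_symbPow_iff
    (hI : I = Ideal.span ((fun A => ∏ v ∈ A, (X v : MvPolynomial (Fin n) K)) '' 𝒜))
    {A : Finset (Fin n)} {s : ℕ} :
    ∏ v ∈ A, X v ∈ symbPow K n I s ↔ ∀ p ∈ I.minimalPrimes, s ≤ (A ∩ varsIn p).card := by
  simp only [symbPow_natCast, Ideal.mem_iInf]
  refine forall₂_congr fun p hp => ?_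
  rw [eq_span_X_varsIn_of_mem_minimalPrimes hI hp, prod_X_mem_span_X_image_pow_iff,
    ← eq_span_X_varsIn_of_mem_minimalPrimes hI hp]

theorem sqfreePart_ne_bot_iff (J : Ideal (MvPolynomial (Fin n) K)) :
    sqfreePart K n J ≠ ⊥ ↔ ∃ A : Finset (Fin n), ∏ v ∈ A, X v ∈ J := by
  rw [sqfreePart, Ne, Ideal.span_eq_bot]
  push Not
  constructor
  · rintro ⟨_, ⟨hJ, A, rfl⟩, -⟩
    exact ⟨A, hJ⟩
  · rintro ⟨A, hA⟩
    exact ⟨_, ⟨hA, A, rfl⟩, prod_X_ne_zero A⟩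

theorem sqfreePart_eq_span_singleton {J : Ideal (MvPolynomial (Fin n) K)} {U : Finset (Fin n)}
    (hJ : ∀ A : Finset (Fin n), ∏ v ∈ A, X v ∈ J ↔ U ⊆ A) :
    sqfreePart K n J = Ideal.span {∏ v ∈ U, X v} := by
  refine le_antisymm ?_ ?_
  · rw [sqfreePart, Ideal.span_le]
    rintro _ ⟨hA, A, rfl⟩
    exact Ideal.mem_span_singleton.2 (Finset.prod_dvd_prod_of_subset _ _ _ ((hJ A).1 hA))
  · rw [Ideal.span_le, Set.singleton_subset_iff]
    exact Ideal.subset_span ⟨(hJ U).2 subset_rfl, U, rfl⟩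

theorem heightI_eq_height (I : Ideal (MvPolynomial (Fin n) K)) : heightI K n I = I.height := by
  rw [heightI, Ideal.height_eq_inf_minimalPrimes, iInf_subtype']
  exact iInf_congr fun p => (PrimeSpectrum.height_eq_orderHeight ⟨p.1, p.2.1.1⟩).symm

theorem ssp_ne_bot_iff
    (hI : I = Ideal.span ((fun A => ∏ v ∈ A, (X v : MvPolynomial (Fin n) K)) '' 𝒜)) (s : ℕ) :
    ssp K n I s ≠ ⊥ ↔ (s : ℕ∞) ≤ heightI K n I := by
  rw [ssp, sqfreePart_ne_bot_iff, heightI_eq_height, Ideal.height_eq_inf_minimalPrimes]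
  simp only [prod_X_mem_symbPow_iff hI, le_iInf₂_iff]
  constructor
  · rintro ⟨A, hA⟩ p hp
    rw [height_eq_card_varsIn_of_mem_minimalPrimes hI hp]
    exact_mod_cast (hA p hp).trans (Finset.card_le_card Finset.inter_subset_right)
  · refine fun h => ⟨Finset.univ, fun p hp => ?_⟩
    have := h p hp
    rw [height_eq_card_varsIn_of_mem_minimalPrimes hI hp] at this
    rw [Finset.univ_inter]
    exact_mod_cast this

theorem ssp_isPrincipal_of_isUnmixed
    (hI : I = Ideal.span ((fun A => ∏ v ∈ A, (X v : MvPolynomial (Fin n) K)) '' 𝒜))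
    (hunmix : I.IsUnmixed) (h : ℕ) (hh : heightI K n I = h) :
    (ssp K n I h).IsPrincipal := by
  classical
  have hcard (p) (hp : p ∈ I.minimalPrimes) : (varsIn p).card = h := by
    have := (hunmix.height_eq hp).trans ((heightI_eq_height I).symm.trans hh)
    rw [height_eq_card_varsIn_of_mem_minimalPrimes hI hp] at this
    exact_mod_cast this
  let U : Finset (Fin n) := Finset.univ.filter fun v => ∃ p ∈ I.minimalPrimes, X v ∈ p
  have hU (A : Finset (Fin n)) : ∏ v ∈ A, X v ∈ symbPow K n I h ↔ U ⊆ A := by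
    calc ∏ v ∈ A, X v ∈ symbPow K n I h
        ↔ ∀ p ∈ I.minimalPrimes, h ≤ (A ∩ varsIn p).card := prod_X_mem_symbPow_iff hI
      _ ↔ ∀ p ∈ I.minimalPrimes, varsIn p ⊆ A := forall₂_congr fun p hp => by
        rw [← hcard p hp, Finset.eq_iff_card_le_of_subset Finset.inter_subset_right,
          Finset.inter_eq_right]
      _ ↔ U ⊆ A := by
        simp only [U, Finset.subset_iff, mem_varsIn, Finset.mem_filter, Finset.mem_univ, true_and]
        grind
  rw [ssp, sqfreePart_eq_span_singleton hU]
  exact ⟨_, rfl⟩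

end SymbolicPower

theorem squarefree_symbolic_power_ne_zero_iff_and_unmixed_principal_general
    (K : Type) [Field K] (n : ℕ) (I : Ideal (MvPolynomial (Fin n) K))
    (𝒜 : Set (Finset (Fin n)))
    (hI : I = Ideal.span ((fun A => ∏ v ∈ A, (X v : MvPolynomial (Fin n) K)) '' 𝒜))
    (s : ℕ) :
    (ssp K n I (s : ℤ) ≠ ⊥ ↔ (s : ℕ∞) ≤ heightI K n I) ∧
    ((∀ p q : Ideal (MvPolynomial (Fin n) K),
        ∀ hp : IsAssociatedPrime p (MvPolynomial (Fin n) K ⧸ I),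
        ∀ hq : IsAssociatedPrime q (MvPolynomial (Fin n) K ⧸ I),
        Order.height (⟨p, hp.1⟩ : PrimeSpectrum (MvPolynomial (Fin n) K)) =
          Order.height (⟨q, hq.1⟩ : PrimeSpectrum (MvPolynomial (Fin n) K))) →
      ∀ h : ℕ, heightI K n I = (h : ℕ∞) →
        Submodule.IsPrincipal (ssp K n I (h : ℤ))) :=
  ⟨ssp_ne_bot_iff hI s, ssp_isPrincipal_of_isUnmixed hI⟩

/-- For a squarefree monomial ideal `I` and `s ≥ 1`, the squarefree part
`I^{s}` of the `s`-th symbolic power is nonzero iff `s ≤ ht I`; moreover if `I` is unmixed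
(all associated primes of `S/I` have the same height), then `I^{ht I}` is principal. -/
theorem squarefree_symbolic_power_ne_zero_iff_and_unmixed_principal
    (K : Type) [Field K] (n : ℕ) (I : Ideal (MvPolynomial (Fin n) K))
    (𝒜 : Set (Finset (Fin n)))
    (hI : I = Ideal.span ((fun A => ∏ v ∈ A, (X v : MvPolynomial (Fin n) K)) '' 𝒜))
    (s : ℕ) (hs : 1 ≤ s) :
    (ssp K n I (s : ℤ) ≠ ⊥ ↔ (s : ℕ∞) ≤ heightI K n I) ∧
    ((∀ p q : Ideal (MvPolynomial (Fin n) K),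
        ∀ hp : IsAssociatedPrime p (MvPolynomial (Fin n) K ⧸ I),
        ∀ hq : IsAssociatedPrime q (MvPolynomial (Fin n) K ⧸ I),
        Order.height (⟨p, hp.1⟩ : PrimeSpectrum (MvPolynomial (Fin n) K)) =
          Order.height (⟨q, hq.1⟩ : PrimeSpectrum (MvPolynomial (Fin n) K))) →
      ∀ h : ℕ, heightI K n I = (h : ℕ∞) →
        Submodule.IsPrincipal (ssp K n I (h : ℤ))) :=
  squarefree_symbolic_power_ne_zero_iff_and_unmixed_principal_general K n I 𝒜 hI s
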